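/- Let f : ℝ^d → ℝ satisfy the SPB growth estimate with parameters R₁, R₂, m and let σ > 0. Set 𝒜 = 2^{2m−2} R₁ σ^{m−1} (m+1+d)^{(m+1)/2} + σ^{−1} R₂ √d, ℬ = 2^{2m−2} σ^{−1} R₁ √d and 𝒞 = 2^{m−1} σ^{−1} R₁ √d. Then ‖∇f_σ(x) − ∇f_σ(y)‖ ≤ (𝒜 + ℬ‖x‖^m + 𝒞‖y − x‖^m) ‖x − y‖ for all x, y ∈ ℝ^d. -/

import Mathlib

open MeasureTheory Filter Set
open scoped InnerProductSpace ENNReal Topology Real NNReal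

/-- The standard Gaussian probability measure `N(0, I)` on `ℝ^d`
(with density `(2π)^{-d/2} e^{-‖u‖²/2}`), realized as the product of `d`
standard one-dimensional Gaussians. -/
noncomputable def stdGaussian (d : ℕ) : Measure (EuclideanSpace ℝ (Fin d)) :=
  Measure.map (MeasurableEquiv.toLp 2 (Fin d → ℝ))
    (Measure.pi fun _ : Fin d => ProbabilityTheory.gaussianReal 0 1)

instance (d : ℕ) : IsProbabilityMeasure (stdGaussian d) :=
  Measure.isProbabilityMeasure_map (MeasurableEquiv.toLp 2 (Fin d → ℝ)).measurable.aemeasurable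

/-- `f` satisfies the SPB growth estimate with parameters `R1, R2, m`:
`|f x - f y| ≤ (2^{m-1} R₁ ‖x‖^m + 2^{m-1} R₁ ‖y-x‖^m + R₂) ‖x-y‖`. -/
def SPBGrowth {d : ℕ} (f : EuclideanSpace ℝ (Fin d) → ℝ) (R1 R2 : ℝ) (m : ℕ) : Prop :=
  ∀ x y : EuclideanSpace ℝ (Fin d),
    |f x - f y| ≤ ((2 : ℝ) ^ ((m : ℤ) - 1) * R1 * ‖x‖ ^ m
      + (2 : ℝ) ^ ((m : ℤ) - 1) * R1 * ‖y - x‖ ^ m + R2) * ‖x - y‖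

/-- The Gaussian smoothing `f_σ(x) = E_{u ∼ N(0,I)}[f (x + σ u)]`. -/
noncomputable def gsmooth {d : ℕ} (σ : ℝ) (f : EuclideanSpace ℝ (Fin d) → ℝ)
    (x : EuclideanSpace ℝ (Fin d)) : ℝ :=
  ∫ u, f (x + σ • u) ∂(stdGaussian d)

/-- The gradient of the Gaussian smoothing:
`∇f_σ(x) = σ⁻¹ E_{u ∼ N(0,I)}[f (x + σ u) u]`. -/
noncomputable def gsGrad {d : ℕ} (σ : ℝ) (f : EuclideanSpace ℝ (Fin d) → ℝ)
    (x : EuclideanSpace ℝ (Fin d)) : EuclideanSpace ℝ (Fin d) :=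
  σ⁻¹ • ∫ u, f (x + σ • u) • u ∂(stdGaussian d)

/-- The constant `ℋ_(p)` of Lemma 4.3. -/
noncomputable def spbH (d m p : ℕ) (R1 R2 σ : ℝ) : ℝ :=
  3 ^ (p - 1) * max ((2 : ℝ) ^ (((m : ℤ) - 1) * p) * R1 ^ p * ((2 * p + d : ℕ) : ℝ) ^ p)
    (R2 ^ p * ((2 * p + d : ℕ) : ℝ) ^ p +
      (2 : ℝ) ^ (((m : ℤ) - 1) * p) * R1 ^ p * σ ^ (m * p) *
        (((m + 2) * p + d : ℕ) : ℝ) ^ ((((m + 2) * p : ℕ) : ℝ) / 2))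

/-- The function `ℳ` of Lemma 4.2. -/
noncomputable def spbM {d : ℕ} (m : ℕ) (R1 R2 σ : ℝ) (x : EuclideanSpace ℝ (Fin d)) : ℝ :=
  ((2 : ℝ) ^ ((m : ℤ) - 1) * R1 * ‖x‖ ^ m + R2) * Real.sqrt d +
    (2 : ℝ) ^ ((m : ℤ) - 1) * R1 * σ ^ m * ((m + 1 + d : ℕ) : ℝ) ^ (((m : ℝ) + 1) / 2)

/-- The constant `𝒜`. -/
noncomputable def spbA (d m : ℕ) (R1 R2 σ : ℝ) : ℝ :=
  (2 : ℝ) ^ (2 * (m : ℤ) - 2) * R1 * σ ^ ((m : ℤ) - 1) *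
      ((m + 1 + d : ℕ) : ℝ) ^ (((m : ℝ) + 1) / 2) + σ⁻¹ * R2 * Real.sqrt d

/-- The constant `ℬ`. -/
noncomputable def spbB (d m : ℕ) (R1 σ : ℝ) : ℝ :=
  (2 : ℝ) ^ (2 * (m : ℤ) - 2) * σ⁻¹ * R1 * Real.sqrt d

/-- The constant `𝒞`. -/
noncomputable def spbC (d m : ℕ) (R1 σ : ℝ) : ℝ :=
  (2 : ℝ) ^ ((m : ℤ) - 1) * σ⁻¹ * R1 * Real.sqrt d

/-!
By linearity of the integral, `∇f_σ(x) - ∇f_σ(y) = σ⁻¹ E[(f (x + σu) - f (y + σu)) u]`.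
The growth estimate at the points `x + σu`, `y + σu`, combined with
`‖x + σu‖^m ≤ 2^(m-1) (‖x‖^m + σ^m ‖u‖^m)`, bounds `|f (x + σu) - f (y + σu)|` by
`(K₁ + K₂ ‖u‖^m) ‖x - y‖`, so the claim reduces to two Gaussian moment bounds: `E‖u‖ ≤ √d`,
from `E‖u‖² = d` and Jensen, and `E‖u‖^p ≤ (p + d)^(p/2)`, from the pointwise bound
`t^p ≤ c^p e^(-p/2) e^(p t² / (2c²))` and `E e^(l‖u‖²) = (1 - 2l)^(-d/2)`.
-/

open ProbabilityTheory

namespace ProbabilityTheory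

variable {E : Type*} [NormedAddCommGroup E] [InnerProductSpace ℝ E] [FiniteDimensional ℝ E]
  [MeasurableSpace E] [BorelSpace E] (μ : Measure E) [IsGaussian μ]

lemma IsGaussian.integrable_norm_pow (p : ℕ) : Integrable (fun u => ‖u‖ ^ p) μ :=
  (IsGaussian.memLp_id μ p (by simp)).integrable_norm_pow'

lemma IsGaussian.integrable_of_norm_le {F : Type*} [NormedAddCommGroup F] {g : E → F}
    (hg : AEStronglyMeasurable g μ) (C : ℝ) (k : ℕ) (hgC : ∀ u, ‖g u‖ ≤ C * (1 + ‖u‖) ^ k) :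
    Integrable g μ := by
  have hmem : MemLp (fun u : E => 1 + ‖u‖) k μ :=
    (memLp_const (1 : ℝ)).add (IsGaussian.memLp_id μ k (by simp)).norm
  refine (hmem.integrable_norm_pow'.const_mul C).mono' hg (ae_of_all _ fun u => ?_)
  simpa [abs_of_nonneg (by positivity : (0 : ℝ) ≤ 1 + ‖u‖)] using hgC u

end ProbabilityTheory

lemma stdGaussian_eq (d : ℕ) :
    stdGaussian d = ProbabilityTheory.stdGaussian (EuclideanSpace ℝ (Fin d)) :=
  map_pi_eq_stdGaussian

instance (d : ℕ) : IsGaussian (stdGaussian d) := by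
  rw [stdGaussian_eq]; infer_instance

lemma integral_sq_gaussianReal (v : ℝ≥0) : ∫ t, t ^ 2 ∂gaussianReal 0 v = v := by
  have := variance_of_integral_eq_zero (X := id) (μ := gaussianReal 0 v) aemeasurable_id
    integral_id_gaussianReal
  simpa [variance_id_gaussianReal] using this.symm

lemma integral_norm_sq_stdGaussian (d : ℕ) : ∫ u, ‖u‖ ^ 2 ∂stdGaussian d = d := by
  rw [_root_.stdGaussian, integral_map_equiv]
  simp_rw [MeasurableEquiv.coe_toLp, EuclideanSpace.real_norm_sq_eq]
  have hcoord (i : Fin d) : ∫ v : Fin d → ℝ, v i ^ 2 ∂Measure.pi (fun _ => gaussianReal 0 1) = 1 :=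
    (integral_comp_eval (μ := fun _ => gaussianReal 0 1) (i := i) (f := fun t : ℝ => t ^ 2)
      (by fun_prop)).trans (by simpa using integral_sq_gaussianReal 1)
  rw [integral_finsetSum _ fun i _ => ?_]
  · simp [hcoord]
  · exact integrable_comp_eval (μ := fun _ => gaussianReal 0 1) (i := i)
      (f := fun t : ℝ => t ^ 2) (by simpa using IsGaussian.integrable_norm_pow (gaussianReal 0 1) 2)

lemma integral_norm_stdGaussian_le (d : ℕ) : ∫ u, ‖u‖ ∂stdGaussian d ≤ √d := by
  have hvar := variance_nonneg (fun u => ‖u‖) (stdGaussian d)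
  rw [variance_eq_sub (X := fun u => ‖u‖) (IsGaussian.memLp_two_id (μ := stdGaussian d)).norm]
    at hvar
  have hsq : (∫ u, ‖u‖ ∂stdGaussian d) ^ 2 ≤ d := by
    simpa [integral_norm_sq_stdGaussian] using hvar
  exact Real.le_sqrt_of_sq_le hsq

lemma gaussianPDFReal_mul_exp_mul_sq (l t : ℝ) :
    gaussianPDFReal 0 1 t * rexp (l * t ^ 2) = (√(2 * π))⁻¹ * rexp (-(1 / 2 - l) * t ^ 2) := by
  rw [gaussianPDFReal_def, mul_assoc, ← Real.exp_add]
  congr 2 <;> simp; ring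

lemma integrable_exp_mul_sq_gaussianReal {l : ℝ} (hl : l < 1 / 2) :
    Integrable (fun t => rexp (l * t ^ 2)) (gaussianReal 0 1) := by
  rw [gaussianReal_of_var_ne_zero 0 one_ne_zero,
    integrable_withDensity_iff (measurable_gaussianPDF 0 1)
      (ae_of_all _ fun _ => gaussianPDF_lt_top)]
  simp_rw [toReal_gaussianPDF, mul_comm (rexp _), gaussianPDFReal_mul_exp_mul_sq]
  exact (integrable_exp_neg_mul_sq (by linarith)).const_mul _

-- For `l ≥ 1 / 2` both sides are junk zeros: the integrand is not integrable and `√` of a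
-- nonpositive number is `0`.
lemma integral_exp_mul_sq_gaussianReal (l : ℝ) :
    ∫ t, rexp (l * t ^ 2) ∂gaussianReal 0 1 = (√(1 - 2 * l))⁻¹ := by
  rw [integral_gaussianReal_eq_integral_smul one_ne_zero]
  simp_rw [smul_eq_mul, gaussianPDFReal_mul_exp_mul_sq]
  rw [integral_const_mul, integral_gaussian, ← Real.sqrt_inv, ← Real.sqrt_mul (by positivity),
    ← Real.sqrt_inv]
  congr 1
  field_simp

lemma exp_mul_norm_sq_toLp {d : ℕ} (l : ℝ) (v : Fin d → ℝ) :
    rexp (l * ‖(MeasurableEquiv.toLp 2 (Fin d → ℝ)) v‖ ^ 2) = ∏ i, rexp (l * v i ^ 2) := by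
  rw [MeasurableEquiv.coe_toLp, EuclideanSpace.real_norm_sq_eq, Finset.mul_sum, Real.exp_sum]

lemma integrable_exp_mul_norm_sq_stdGaussian (d : ℕ) {l : ℝ} (hl : l < 1 / 2) :
    Integrable (fun u => rexp (l * ‖u‖ ^ 2)) (stdGaussian d) := by
  rw [_root_.stdGaussian, integrable_map_equiv]
  simp_rw [Function.comp_def, exp_mul_norm_sq_toLp]
  exact Integrable.fintype_prod fun _ => integrable_exp_mul_sq_gaussianReal hl

lemma integral_exp_mul_norm_sq_stdGaussian (d : ℕ) (l : ℝ) :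
    ∫ u, rexp (l * ‖u‖ ^ 2) ∂stdGaussian d = (√(1 - 2 * l))⁻¹ ^ d := by
  rw [_root_.stdGaussian, integral_map_equiv]
  simp_rw [exp_mul_norm_sq_toLp]
  rw [integral_fintype_prod_eq_pow (fun t => rexp (l * t ^ 2)), integral_exp_mul_sq_gaussianReal,
    Fintype.card_fin]

lemma pow_le_pow_mul_exp (p : ℕ) {t c : ℝ} (ht : 0 ≤ t) (hc : 0 < c) :
    t ^ p ≤ c ^ p * rexp (-(p / 2)) * rexp (p / (2 * c ^ 2) * t ^ 2) := by
  -- `y ≤ (1 + y²) / 2 ≤ exp ((y² - 1) / 2)`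
  have hy : t / c ≤ rexp (((t / c) ^ 2 - 1) / 2) := by
    nlinarith [Real.add_one_le_exp (((t / c) ^ 2 - 1) / 2), sq_nonneg (t / c - 1)]
  calc t ^ p = c ^ p * (t / c) ^ p := by rw [div_pow, mul_div_cancel₀ _ (by positivity)]
    _ ≤ c ^ p * rexp (((t / c) ^ 2 - 1) / 2) ^ p := by gcongr
    _ = c ^ p * rexp (-(p / 2)) * rexp (p / (2 * c ^ 2) * t ^ 2) := by
      rw [← Real.exp_nat_mul, mul_assoc, ← Real.exp_add]
      congr 2
      field_simp
      ring

lemma integral_norm_pow_stdGaussian_le_of_lt_sq (d p : ℕ) {c : ℝ} (hc : 0 < c) (hpc : p < c ^ 2) :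
    ∫ u, ‖u‖ ^ p ∂stdGaussian d ≤ c ^ p * rexp (-(p / 2)) * (√(1 - p / c ^ 2))⁻¹ ^ d := by
  have hl : (p : ℝ) / (2 * c ^ 2) < 1 / 2 := by
    rw [div_lt_iff₀ (by positivity)]; linarith
  calc ∫ u, ‖u‖ ^ p ∂stdGaussian d
      ≤ ∫ u, c ^ p * rexp (-(p / 2)) * rexp (p / (2 * c ^ 2) * ‖u‖ ^ 2) ∂stdGaussian d :=
        integral_mono (IsGaussian.integrable_norm_pow _ p)
          ((integrable_exp_mul_norm_sq_stdGaussian d hl).const_mul _)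
          fun u => pow_le_pow_mul_exp p (norm_nonneg u) hc
    _ = c ^ p * rexp (-(p / 2)) * (√(1 - p / c ^ 2))⁻¹ ^ d := by
      rw [integral_const_mul, integral_exp_mul_norm_sq_stdGaussian]
      congr 4
      field_simp

lemma integral_norm_pow_stdGaussian_le (d p : ℕ) :
    ∫ u, ‖u‖ ^ p ∂stdGaussian d ≤ ((p + d : ℕ) : ℝ) ^ ((p : ℝ) / 2) := by
  rcases Nat.eq_zero_or_pos d with rfl | hd
  · simp only [Subsingleton.elim _ (0 : EuclideanSpace ℝ (Fin 0)), norm_zero, integral_const,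
      probReal_univ, one_smul]
    rcases Nat.eq_zero_or_pos p with rfl | hp
    · simp
    · rw [zero_pow hp.ne']; positivity
  -- With `c² = p + d` the factor `(1 - p / c²)^(-d/2) = (1 + p / d)^(d/2) ≤ exp (p / 2)` cancels
  -- `exp (-(p / 2))`.
  have hd' : (0 : ℝ) < d := by exact_mod_cast hd
  have hc : 0 < √((p + d : ℕ) : ℝ) := Real.sqrt_pos.2 (by positivity)
  have hpc : (p : ℝ) < √((p + d : ℕ) : ℝ) ^ 2 := by
    rw [Real.sq_sqrt (by positivity)]; push_cast; linarith
  have hgrowth : (√(1 - p / √((p + d : ℕ) : ℝ) ^ 2))⁻¹ ≤ rexp (p / d / 2) := by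
    rw [Real.sq_sqrt (by positivity), ← Real.sqrt_inv, Real.exp_half]
    refine Real.sqrt_le_sqrt ?_
    calc (1 - (p : ℝ) / ((p + d : ℕ) : ℝ))⁻¹ = p / d + 1 := by
          rw [Nat.cast_add, one_sub_div (by positivity), add_sub_cancel_left, inv_div, add_div,
            div_self hd'.ne']
      _ ≤ rexp (p / d) := Real.add_one_le_exp _
  calc ∫ u, ‖u‖ ^ p ∂stdGaussian d
      ≤ √((p + d : ℕ) : ℝ) ^ p * rexp (-(p / 2)) * (√(1 - p / √((p + d : ℕ) : ℝ) ^ 2))⁻¹ ^ d :=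
        integral_norm_pow_stdGaussian_le_of_lt_sq d p hc hpc
    _ ≤ √((p + d : ℕ) : ℝ) ^ p * rexp (-(p / 2)) * rexp (p / d / 2) ^ d := by
        gcongr
    _ = ((p + d : ℕ) : ℝ) ^ ((p : ℝ) / 2) := by
        rw [← Real.exp_nat_mul, mul_assoc, ← Real.exp_add, Real.sqrt_eq_rpow, ← Real.rpow_natCast,
          ← Real.rpow_mul (by positivity)]
        field_simp
        simp

lemma add_pow_le_two_zpow_mul {a b : ℝ} (ha : 0 ≤ a) (hb : 0 ≤ b) (m : ℕ) :
    (a + b) ^ m ≤ (2 : ℝ) ^ ((m : ℤ) - 1) * (a ^ m + b ^ m) := by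
  cases m with
  | zero => norm_num
  | succ k => simpa using add_pow_le ha hb (k + 1)

section SPBGrowth

variable {d : ℕ} {f : EuclideanSpace ℝ (Fin d) → ℝ} {R1 R2 : ℝ} {m : ℕ}

lemma SPBGrowth.continuous (hf : SPBGrowth f R1 R2 m) : Continuous f := by
  refine continuous_iff_continuousAt.2 fun x => tendsto_iff_dist_tendsto_zero.2 ?_
  have hK : Continuous fun y => ((2 : ℝ) ^ ((m : ℤ) - 1) * R1 * ‖x‖ ^ m
      + (2 : ℝ) ^ ((m : ℤ) - 1) * R1 * ‖y - x‖ ^ m + R2) * ‖x - y‖ := by fun_prop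
  refine squeeze_zero (fun _ => dist_nonneg) (fun y => ?_) (by simpa using hK.tendsto x)
  rw [Real.dist_eq, abs_sub_comm]
  exact hf x y

lemma SPBGrowth.abs_le (hR1 : 0 ≤ R1) (hR2 : 0 ≤ R2) (hf : SPBGrowth f R1 R2 m) (w) :
    |f w| ≤ (|f 0| + 2 * (2 : ℝ) ^ ((m : ℤ) - 1) * R1 + R2) * (1 + ‖w‖) ^ (m + 1) := by
  have hw := hf w 0
  simp only [zero_sub, norm_neg, sub_zero] at hw
  have h1 : 1 ≤ (1 + ‖w‖) ^ (m + 1) := one_le_pow₀ (by simp)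
  have h2 : ‖w‖ ^ m * ‖w‖ ≤ (1 + ‖w‖) ^ (m + 1) := by
    rw [← pow_succ]; gcongr; simp
  have h3 : ‖w‖ ≤ (1 + ‖w‖) ^ (m + 1) := le_trans (by simp) (le_self_pow₀ (by simp) (by simp))
  have := abs_sub_abs_le_abs_sub (f w) (f 0)
  have hc : 0 ≤ (2 : ℝ) ^ ((m : ℤ) - 1) * R1 := by positivity
  nlinarith [mul_le_mul_of_nonneg_left h1 (abs_nonneg (f 0)), mul_le_mul_of_nonneg_left h2 hc,
    mul_le_mul_of_nonneg_left h3 hR2]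

lemma SPBGrowth.integrable_smul (hR1 : 0 ≤ R1) (hR2 : 0 ≤ R2) (hf : SPBGrowth f R1 R2 m)
    (z : EuclideanSpace ℝ (Fin d)) (σ : ℝ) :
    Integrable (fun u => f (z + σ • u) • u) (stdGaussian d) := by
  set A := |f 0| + 2 * (2 : ℝ) ^ ((m : ℤ) - 1) * R1 + R2
  set B := 1 + ‖z‖ + |σ|
  refine IsGaussian.integrable_of_norm_le _ ((hf.continuous.comp (by fun_prop)).smul
    continuous_id).aestronglyMeasurable (A * B ^ (m + 1)) (m + 2) fun u => ?_
  have hw : 1 + ‖z + σ • u‖ ≤ B * (1 + ‖u‖) := by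
    have := norm_add_le z (σ • u)
    rw [norm_smul, Real.norm_eq_abs] at this
    nlinarith [norm_nonneg z, norm_nonneg u, abs_nonneg σ]
  calc ‖f (z + σ • u) • u‖ = |f (z + σ • u)| * ‖u‖ := by rw [norm_smul, Real.norm_eq_abs]
    _ ≤ A * (1 + ‖z + σ • u‖) ^ (m + 1) * (1 + ‖u‖) := by
      gcongr
      · exact hf.abs_le hR1 hR2 _
      · simp
    _ ≤ A * (B * (1 + ‖u‖)) ^ (m + 1) * (1 + ‖u‖) := by gcongr
    _ = A * B ^ (m + 1) * (1 + ‖u‖) ^ (m + 2) := by rw [mul_pow]; ring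

lemma SPBGrowth.abs_sub_add_smul_le (hR1 : 0 ≤ R1) (hf : SPBGrowth f R1 R2 m)
    (x y u : EuclideanSpace ℝ (Fin d)) {σ : ℝ} (hσ : 0 ≤ σ) :
    |f (x + σ • u) - f (y + σ • u)| ≤
      ((2 : ℝ) ^ ((m : ℤ) - 1) * (2 : ℝ) ^ ((m : ℤ) - 1) * R1 * ‖x‖ ^ m
        + (2 : ℝ) ^ ((m : ℤ) - 1) * R1 * ‖y - x‖ ^ m + R2) * ‖x - y‖
      + (2 : ℝ) ^ ((m : ℤ) - 1) * (2 : ℝ) ^ ((m : ℤ) - 1) * R1 * σ ^ m * ‖x - y‖ * ‖u‖ ^ m := by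
  have hxu : ‖x + σ • u‖ ^ m ≤ (2 : ℝ) ^ ((m : ℤ) - 1) * (‖x‖ ^ m + σ ^ m * ‖u‖ ^ m) := by
    calc ‖x + σ • u‖ ^ m ≤ (‖x‖ + σ * ‖u‖) ^ m := by
          gcongr
          simpa [norm_smul, abs_of_nonneg hσ] using norm_add_le x (σ • u)
      _ ≤ _ := by
          rw [← mul_pow]; exact add_pow_le_two_zpow_mul (norm_nonneg x) (by positivity) m
  have h := hf (x + σ • u) (y + σ • u)
  rw [show y + σ • u - (x + σ • u) = y - x by abel, show x + σ • u - (y + σ • u) = x - y by abel]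
    at h
  refine h.trans ?_
  have hc : 0 ≤ (2 : ℝ) ^ ((m : ℤ) - 1) * R1 := by positivity
  have := mul_le_mul_of_nonneg_right (mul_le_mul_of_nonneg_left hxu hc) (norm_nonneg (x - y))
  linear_combination this

end SPBGrowth

lemma norm_integral_smul_stdGaussian_le {d : ℕ} {g : EuclideanSpace ℝ (Fin d) → ℝ} {a b : ℝ}
    (ha : 0 ≤ a) (hb : 0 ≤ b) (m : ℕ) (hg : ∀ u, |g u| ≤ a + b * ‖u‖ ^ m) :
    ‖∫ u, g u • u ∂stdGaussian d‖ ≤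
      a * √d + b * ((m + 1 + d : ℕ) : ℝ) ^ (((m : ℝ) + 1) / 2) := by
  have hint (p : ℕ) := IsGaussian.integrable_norm_pow (stdGaussian d) p
  calc ‖∫ u, g u • u ∂stdGaussian d‖
      ≤ ∫ u, ‖g u • u‖ ∂stdGaussian d := norm_integral_le_integral_norm _
    _ ≤ ∫ u, a * ‖u‖ ^ 1 + b * ‖u‖ ^ (m + 1) ∂stdGaussian d := by
        refine integral_mono_of_nonneg (ae_of_all _ fun u => norm_nonneg _)
          (((hint 1).const_mul a).add ((hint (m + 1)).const_mul b)) (ae_of_all _ fun u => ?_)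
        calc ‖g u • u‖ = |g u| * ‖u‖ := by rw [norm_smul, Real.norm_eq_abs]
          _ ≤ (a + b * ‖u‖ ^ m) * ‖u‖ := by gcongr; exact hg u
          _ = a * ‖u‖ ^ 1 + b * ‖u‖ ^ (m + 1) := by ring
    _ = a * ∫ u, ‖u‖ ∂stdGaussian d + b * ∫ u, ‖u‖ ^ (m + 1) ∂stdGaussian d := by
        rw [integral_add ((hint 1).const_mul a) ((hint (m + 1)).const_mul b), integral_const_mul,
          integral_const_mul]
        simp only [pow_one]
    _ ≤ a * √d + b * ((m + 1 + d : ℕ) : ℝ) ^ (((m : ℝ) + 1) / 2) := by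
        gcongr
        · exact integral_norm_stdGaussian_le d
        · exact_mod_cast integral_norm_pow_stdGaussian_le d (m + 1)

lemma gsGrad_sub_gsGrad {d : ℕ} {σ : ℝ} {f : EuclideanSpace ℝ (Fin d) → ℝ}
    {x y : EuclideanSpace ℝ (Fin d)}
    (hx : Integrable (fun u => f (x + σ • u) • u) (stdGaussian d))
    (hy : Integrable (fun u => f (y + σ • u) • u) (stdGaussian d)) :
    gsGrad σ f x - gsGrad σ f y
      = σ⁻¹ • ∫ u, (f (x + σ • u) - f (y + σ • u)) • u ∂(stdGaussian d) := by
  simp_rw [gsGrad, ← smul_sub, ← integral_sub hx hy, sub_smul]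

theorem gsGrad_lipschitz_type_general {d : ℕ} (f : EuclideanSpace ℝ (Fin d) → ℝ)
    (R1 R2 : ℝ) (m : ℕ) (hR1 : 0 ≤ R1) (hR2 : 0 < R2)
    (hf : SPBGrowth f R1 R2 m) (σ : ℝ) (hσ : 0 < σ) (x y : EuclideanSpace ℝ (Fin d)) :
    ‖gsGrad σ f x - gsGrad σ f y‖ ≤
      (spbA d m R1 R2 σ + spbB d m R1 σ * ‖x‖ ^ m + spbC d m R1 σ * ‖y - x‖ ^ m)
        * ‖x - y‖ := by
  have hmean := norm_integral_smul_stdGaussian_le (by positivity) (by positivity) m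
    fun u => hf.abs_sub_add_smul_le hR1 x y u hσ.le
  rw [gsGrad_sub_gsGrad (hf.integrable_smul hR1 hR2.le x σ) (hf.integrable_smul hR1 hR2.le y σ),
    norm_smul, Real.norm_of_nonneg (inv_nonneg.2 hσ.le)]
  refine (mul_le_mul_of_nonneg_left hmean (inv_nonneg.2 hσ.le)).trans_eq ?_
  have hc : (2 : ℝ) ^ (2 * (m : ℤ) - 2) = 2 ^ ((m : ℤ) - 1) * 2 ^ ((m : ℤ) - 1) := by
    rw [← zpow_add₀ two_ne_zero]; ring_nf
  have hσm : σ ^ ((m : ℤ) - 1) = σ ^ m * σ⁻¹ := by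
    rw [zpow_sub₀ hσ.ne', zpow_natCast, zpow_one, div_eq_mul_inv]
  rw [spbA, spbB, spbC, hc, hσm]
  ring

/-- Theorem 3.5(ii). Lipschitz-type bound for `∇f_σ`:
`‖∇f_σ(x) - ∇f_σ(y)‖ ≤ (𝒜 + ℬ ‖x‖^m + 𝒞 ‖y - x‖^m) ‖x - y‖`. -/
theorem gsGrad_lipschitz_type {d : ℕ} (hd : 1 ≤ d) (f : EuclideanSpace ℝ (Fin d) → ℝ)
    (R1 R2 : ℝ) (m : ℕ) (hR1 : 0 ≤ R1) (hR2 : 0 < R2) (hR1m : R1 = 0 ↔ m = 0)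
    (hf : SPBGrowth f R1 R2 m) (σ : ℝ) (hσ : 0 < σ) (x y : EuclideanSpace ℝ (Fin d)) :
    ‖gsGrad σ f x - gsGrad σ f y‖ ≤
      (spbA d m R1 R2 σ + spbB d m R1 σ * ‖x‖ ^ m + spbC d m R1 σ * ‖y - x‖ ^ m)
        * ‖x - y‖ :=
  gsGrad_lipschitz_type_general f R1 R2 m hR1 hR2 hf σ hσ x y
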